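/- For any labeled finite simple graph G on n ≥ 1 vertices, span⟨G⟩ ≤ 4n − 4g(G), where g(G) = 1 − (k + l − n)/2 is the atom genus, k = corank A(G(s_A)) + 1 is the number of circles in the A-state s_A (the set of vertices labeled −) and l = corank A(G(s_B)) + 1 is the number of circles in the B-state s_B (the set of vertices labeled +). Equivalently, span⟨G⟩ ≤ 2n + 2(k−1) + 2(l−1). -/

import Mathlib

open Matrix LaurentPolynomial
open scoped Classical

noncomputable section

def adjMatS {V : Type} (G : SimpleGraph V) (s : Finset V) : Matrix s s (ZMod 2) :=
  fun i j => if G.Adj i.1 j.1 then 1 else 0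

def corankS {V : Type} (G : SimpleGraph V) (s : Finset V) : ℕ :=
  s.card - (adjMatS G s).rank

def adjMat {V : Type} [Fintype V] (G : SimpleGraph V) : Matrix V V (ZMod 2) :=
  fun i j => if G.Adj i j then 1 else 0

def corankM {m : Type} [Fintype m] (M : Matrix m m (ZMod 2)) : ℕ :=
  Fintype.card m - M.rank

def alphaCount {V : Type} [Fintype V] (σ : V → Bool) (s : Finset V) : ℕ :=
  (s.filter (fun i => σ i = false)).card + ((sᶜ).filter (fun i => σ i = true)).card

def bracket {V : Type} [Fintype V] (G : SimpleGraph V) (σ : V → Bool) : LaurentPolynomial ℚ :=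
  ∑ s : Finset V, T (2 * (alphaCount σ s : ℤ) - (Fintype.card V : ℤ)) *
    (-T 2 - T (-2)) ^ (corankS G s)

def lspan (p : LaurentPolynomial ℚ) : ℤ := (p.coeff.support.max.unbotD 0) - (p.coeff.support.min.untopD 0)

def Bmat {V : Type} [Fintype V] (G : SimpleGraph V) (x : V) : Matrix V V (ZMod 2) :=
  adjMat G + 1 + Matrix.single x x 1

def writhe {V : Type} [Fintype V] (G : SimpleGraph V) (σ : V → Bool) : ℤ :=
  ∑ x, (-1 : ℤ) ^ (corankM (Bmat G x)) * (if σ x then 1 else -1)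

def extAdj {V : Type} (G : SimpleGraph V) (N : Set V) : V ⊕ Bool → V ⊕ Bool → Prop
  | .inl i, .inl j => G.Adj i j
  | .inl i, .inr _ => i ∈ N
  | .inr _, .inl j => j ∈ N
  | .inr _, .inr _ => False

def ext2 {V : Type} (G : SimpleGraph V) (N : Set V) : SimpleGraph (V ⊕ Bool) where
  Adj := extAdj G N
  symm := ⟨by
    rintro (i|b) (j|c) h
    · exact G.symm.symm _ _ h
    · exact h
    · exact h
    · exact h⟩
  loopless := ⟨by
    rintro (i|b) h
    · exact G.irrefl h
    · exact h⟩

def optExt {V : Type} (G : SimpleGraph V) : SimpleGraph (Option V) where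
  Adj x y := match x, y with
    | some i, some j => G.Adj i j
    | _, _ => False
  symm := ⟨by
    rintro (_|i) (_|j) h
    · exact h
    · exact h
    · exact h
    · exact G.symm.symm _ _ h⟩
  loopless := ⟨by
    rintro (_|i) h
    · exact h
    · exact G.irrefl h⟩

/-!
The state sum has one term `a^(2α(s) - n) δ^(c(s))` per state `s`, with `δ = -a² - a⁻²` and
`c(s)` the corank of the principal submatrix on `s`; its degrees lie in
`[2α(s) - n - 2c(s), 2α(s) - n + 2c(s)]`. Enlarging a principal submatrix by one index raises
its size by one and its rank by at most two, so `c` is `1`-Lipschitz for the symmetric-difference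
distance on states. As `α(s) = |s ∆ s_B| = n - |s ∆ s_A|`, every top degree is at most
`n + 2c(s_A)` and every bottom degree at least `-n - 2c(s_B)`.
-/

open Finset
open scoped symmDiff

namespace Matrix

variable {ι κ n K : Type*} [Field K] [Fintype n]

theorem rank_submatrix_subtype_le_add_card_sdiff (A : Matrix ι κ K) (c : n → κ)
    {s t : Finset ι} (hst : s ⊆ t) :
    (A.submatrix ((↑) : t → ι) c).rank ≤
      (A.submatrix ((↑) : s → ι) c).rank + (t \ s).card := by
  set r : ι → n → K := fun i j => A i (c j)
  have hrows (u : Finset ι) : Set.range (A.submatrix ((↑) : u → ι) c).row = r '' u := by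
    ext v
    constructor
    · rintro ⟨⟨i, hi⟩, rfl⟩
      exact ⟨i, hi, rfl⟩
    · rintro ⟨i, hi, rfl⟩
      exact ⟨⟨i, hi⟩, rfl⟩
  have ht : r '' t = r '' s ∪ ((t \ s).image r : Set (n → K)) := by
    rw [coe_image, ← Set.image_union, ← coe_union, union_sdiff_of_subset hst]
  rw [rank_eq_finrank_span_row, rank_eq_finrank_span_row, hrows, hrows, ht, Submodule.span_union]
  calc _ ≤ Module.finrank K (Submodule.span K (r '' s)) +
        Module.finrank K (Submodule.span K ((t \ s).image r : Set (n → K))) :=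
        Submodule.finrank_add_le_finrank_add_finrank _ _
    _ ≤ _ := by
      gcongr
      exact (finrank_span_finset_le_card _).trans card_image_le

theorem rank_submatrix_subtype_le_add_two_mul_card_sdiff (A : Matrix ι ι K)
    {s t : Finset ι} (hst : s ⊆ t) :
    (A.submatrix ((↑) : t → ι) ((↑) : t → ι)).rank ≤
      (A.submatrix ((↑) : s → ι) ((↑) : s → ι)).rank + 2 * (t \ s).card := by
  have hrows := A.rank_submatrix_subtype_le_add_card_sdiff ((↑) : t → ι) hst
  have hcols := Aᵀ.rank_submatrix_subtype_le_add_card_sdiff ((↑) : s → ι) hst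
  rw [← transpose_submatrix, rank_transpose, ← transpose_submatrix, rank_transpose] at hcols
  omega

theorem rank_submatrix_subtype_mono (A : Matrix ι ι K) {s t : Finset ι} (hst : s ⊆ t) :
    (A.submatrix ((↑) : s → ι) ((↑) : s → ι)).rank ≤
      (A.submatrix ((↑) : t → ι) ((↑) : t → ι)).rank :=
  let incl (i : s) : t := ⟨i, hst i.2⟩
  (A.submatrix ((↑) : t → ι) ((↑) : t → ι)).rank_submatrix_le incl incl

end Matrix

section Corank

variable {V : Type} (G : SimpleGraph V)

theorem adjMatS_eq_submatrix (s : Finset V) :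
    adjMatS G s = (G.adjMatrix (ZMod 2)).submatrix (↑) (↑) :=
  rfl

theorem natCast_corankS (s : Finset V) :
    (corankS G s : ℤ) = s.card - (adjMatS G s).rank := by
  have h : (adjMatS G s).rank ≤ s.card :=
    (rank_le_card_width _).trans_eq (Fintype.card_coe s)
  rw [corankS, Nat.cast_sub h]

theorem corankS_le_of_subset {s t : Finset V} (hst : s ⊆ t) :
    (corankS G s : ℤ) ≤ corankS G t + (t \ s).card := by
  have := Matrix.rank_submatrix_subtype_le_add_two_mul_card_sdiff (G.adjMatrix (ZMod 2)) hst
  rw [natCast_corankS, natCast_corankS, adjMatS_eq_submatrix, adjMatS_eq_submatrix,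
    ← card_sdiff_add_card_eq_card hst]
  push_cast
  omega

theorem corankS_le_of_superset {s t : Finset V} (hst : s ⊆ t) :
    (corankS G t : ℤ) ≤ corankS G s + (t \ s).card := by
  have := Matrix.rank_submatrix_subtype_mono (G.adjMatrix (ZMod 2)) hst
  rw [natCast_corankS, natCast_corankS, adjMatS_eq_submatrix, adjMatS_eq_submatrix,
    ← card_sdiff_add_card_eq_card hst]
  push_cast
  omega

theorem corankS_le_add_card_symmDiff (s t : Finset V) :
    (corankS G s : ℤ) ≤ corankS G t + (s ∆ t).card := by
  have hs := corankS_le_of_superset G (inter_subset_left : s ∩ t ⊆ s)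
  have ht := corankS_le_of_subset G (inter_subset_right : s ∩ t ⊆ t)
  rw [sdiff_inter_self_left] at hs
  rw [sdiff_inter_self_right] at ht
  rw [symmDiff_def, sup_eq_union, card_union_of_disjoint disjoint_sdiff_sdiff]
  push_cast
  omega

end Corank

namespace LaurentPolynomial

variable {R : Type*}

theorem support_T_subset [Semiring R] (n : ℤ) :
    (T n : R[T;T⁻¹]).coeff.support ⊆ Icc n n := by
  show (Finsupp.single n (1 : R)).support ⊆ _
  exact Finsupp.support_single_subset.trans (by simp)

theorem support_mul_subset_Icc [Semiring R] {p q : R[T;T⁻¹]} {a b c d : ℤ}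
    (hp : p.coeff.support ⊆ Icc a b) (hq : q.coeff.support ⊆ Icc c d) :
    (p * q).coeff.support ⊆ Icc (a + c) (b + d) :=
  (AddMonoidAlgebra.support_coeff_mul_subset p q).trans
    ((add_subset_add hp hq).trans (Icc_add_Icc_subset a b c d))

theorem support_pow_subset_Icc [Semiring R] {p : R[T;T⁻¹]} {a b : ℤ}
    (hp : p.coeff.support ⊆ Icc a b) (k : ℕ) :
    (p ^ k).coeff.support ⊆ Icc (k * a) (k * b) := by
  induction k with
  | zero => simpa using support_T_subset (R := R) 0
  | succ k ih =>
    rw [pow_succ]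
    convert support_mul_subset_Icc ih hp using 2 <;> push_cast <;> ring

theorem support_sum_subset_Icc [Semiring R] {ι : Type*} (s : Finset ι) {f : ι → R[T;T⁻¹]}
    {a b : ℤ} (hf : ∀ i ∈ s, (f i).coeff.support ⊆ Icc a b) :
    (∑ i ∈ s, f i).coeff.support ⊆ Icc a b := by
  rw [AddMonoidAlgebra.coeff_sum]
  exact Finsupp.support_finsetSum.trans (biUnion_subset.2 hf)

theorem support_neg_T_sub_T_neg_subset [Ring R] (m : ℕ) :
    (-T m - T (-m) : R[T;T⁻¹]).coeff.support ⊆ Icc (-m : ℤ) m := by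
  rw [AddMonoidAlgebra.coeff_sub, AddMonoidAlgebra.coeff_neg]
  refine Finsupp.support_sub.trans (union_subset ?_ ?_)
  · rw [Finsupp.support_neg]
    exact (support_T_subset _).trans (Icc_subset_Icc (by omega) le_rfl)
  · exact (support_T_subset _).trans (Icc_subset_Icc le_rfl (by omega))

end LaurentPolynomial

theorem lspan_le_of_support_subset_Icc {p : LaurentPolynomial ℚ} {a b : ℤ}
    (hp : p.coeff.support ⊆ Icc a b) (hab : a ≤ b) : lspan p ≤ b - a := by
  rcases p.coeff.support.eq_empty_or_nonempty with h | hne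
  · simpa [lspan, h] using hab
  · have hmax := mem_Icc.1 (hp (max'_mem _ hne))
    have hmin := mem_Icc.1 (hp (min'_mem _ hne))
    rw [lspan, ← coe_max' hne, ← coe_min' hne, WithBot.unbotD_coe, WithTop.untopD_coe]
    omega

section States

variable {V : Type} [Fintype V] (σ : V → Bool)

theorem alphaCount_eq_card_symmDiff (s : Finset V) :
    alphaCount σ s = (s ∆ univ.filter (σ · = true)).card := by
  rw [alphaCount, symmDiff_def, sup_eq_union, card_union_of_disjoint disjoint_sdiff_sdiff]
  congr 2 <;> ext i <;> simp [and_comm]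

theorem filter_eq_false_eq_compl_filter_eq_true :
    univ.filter (σ · = false) = (univ.filter (σ · = true))ᶜ := by
  ext i
  simp

theorem card_symmDiff_add_card_symmDiff_compl (s u : Finset V) :
    (s ∆ uᶜ).card + (s ∆ u).card = Fintype.card V := by
  have hcompl : s ∆ uᶜ = (s ∆ u)ᶜ := by
    ext i
    simp only [mem_symmDiff, mem_compl]
    tauto
  rw [hcompl, card_compl, Nat.sub_add_cancel (card_le_univ _)]

variable (G : SimpleGraph V) (s : Finset V)

theorem corankS_le_corankS_filter_true_add_alphaCount :
    (corankS G s : ℤ) ≤ corankS G (univ.filter (σ · = true)) + alphaCount σ s := by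
  rw [alphaCount_eq_card_symmDiff]
  exact corankS_le_add_card_symmDiff G _ _

theorem corankS_add_alphaCount_le_corankS_filter_false_add_card :
    (corankS G s : ℤ) + alphaCount σ s ≤
      corankS G (univ.filter (σ · = false)) + Fintype.card V := by
  have hcorank := corankS_le_add_card_symmDiff G s (univ.filter (σ · = false))
  have hcard := card_symmDiff_add_card_symmDiff_compl s (univ.filter (σ · = true))
  rw [← filter_eq_false_eq_compl_filter_eq_true] at hcard
  rw [alphaCount_eq_card_symmDiff]
  omega

end States

theorem span_le_general {V : Type} [Fintype V] (G : SimpleGraph V) (σ : V → Bool) :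
    lspan (bracket G σ) ≤ 2 * (Fintype.card V : ℤ) +
      2 * (corankS G (Finset.univ.filter (fun i => σ i = false)) : ℤ) +
      2 * (corankS G (Finset.univ.filter (fun i => σ i = true)) : ℤ) := by
  have hterm (s : Finset V) :
      (T (2 * (alphaCount σ s : ℤ) - Fintype.card V) * (-T 2 - T (-2)) ^ corankS G s :
          ℚ[T;T⁻¹]).coeff.support ⊆
        Icc (-Fintype.card V - 2 * corankS G (univ.filter (σ · = true)))
          (Fintype.card V + 2 * corankS G (univ.filter (σ · = false))) := by
    have hlo := corankS_le_corankS_filter_true_add_alphaCount σ G s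
    have hhi := corankS_add_alphaCount_le_corankS_filter_false_add_card σ G s
    refine (support_mul_subset_Icc (support_T_subset _)
      (support_pow_subset_Icc (support_neg_T_sub_T_neg_subset 2) _)).trans
        (Icc_subset_Icc ?_ ?_) <;> push_cast <;> linarith
  have hspan := lspan_le_of_support_subset_Icc (support_sum_subset_Icc univ fun s _ => hterm s)
    (by omega)
  rw [bracket]
  linarith

/-- span⟨G⟩ ≤ 4n - 4g(G) = 2n + 2(k-1) + 2(l-1), where k-1 and l-1 are the
coranks of the A-state (all `-` vertices) and B-state (all `+` vertices). -/
theorem span_le {V : Type} [Fintype V] (G : SimpleGraph V) (σ : V → Bool)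
    (hn : 1 ≤ Fintype.card V) :
    lspan (bracket G σ) ≤ 2 * (Fintype.card V : ℤ) +
      2 * (corankS G (Finset.univ.filter (fun i => σ i = false)) : ℤ) +
      2 * (corankS G (Finset.univ.filter (fun i => σ i = true)) : ℤ) :=
  span_le_general G σ
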